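/- Let d ≥ 2 be an integer, h = π/n for some n ∈ ℕ, u ∈ H^h_d, r ∈ [0,∞), and N ∈ ℕ with N·h ≥ r, and assume Σ_{x ∈ ω_h^{d−1}} u(x,0) = 0. Then: (i) for every k ∈ I_{π/h}^{d−1} ∖ {0}, (Q(λ(k·h)))^{−N} ≤ (1 + √c · r)^{−1}; and (ii) ‖u(·, N·h)‖_{L²_h(ω_h^{d−1})} ≤ (1 + √c · r)^{−1} · ‖u(·, 0)‖_{L²_h(ω_h^{d−1})}, where c = inf_{s∈[−π,π]∖{0}} (1 − cos s)/s². -/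

import Mathlib

open scoped Real

/-!
A quantitative decay estimate, on the Fourier side and in `L²_h`, for mean-zero
bounded periodic discrete harmonic functions on the half-space mesh
`(hℤ^{d-1}) × (hℕ₀)` with `h = π/n`; integer coordinates as in the paper.
-/

/-- The cube `I_n^m = {-n+1,…,n}^m` of integer points (`ω_h^m = h·I_{π/h}^m`). -/
noncomputable def ILpi (m n : ℕ) : Finset (Fin m → ℤ) :=
  Finset.Icc (fun _ => -(n:ℤ) + 1) (fun _ => (n:ℤ))

/-- `Q(z) = z + √(z+1)·√(z−1)` (real form; the statement only evaluates `Q` at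
real arguments `λ(t) ≥ 1`). -/
noncomputable def Qr (z : ℝ) : ℝ := z + Real.sqrt (z+1) * Real.sqrt (z-1)

/-- `λ(t) = d − Σ_{i=1}^{d-1} cos t_i`. -/
noncomputable def lam (d : ℕ) (t : Fin (d-1) → ℝ) : ℝ := (d:ℝ) - ∑ i, Real.cos (t i)

/-- `c = inf_{s ∈ [−π,π] \ {0}} (1 − cos s)/s²`. -/
noncomputable def cLow : ℝ :=
  sInf ((fun s => (1 - Real.cos s) / s ^ 2) '' (Set.Icc (-π) π \ {0}))

/-- `u` belongs to `H^h_{d,≥0}` with `h = π/n`: bounded, `2π`-periodic in the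
first `d-1` variables, and discrete harmonic on `(hℤ^{d-1}) × (hℕ)`. -/
def HalfHarmMesh (d n : ℕ) (u : (Fin (d-1) → ℤ) → ℕ → ℂ) : Prop :=
  (∃ B : ℝ, ∀ x y, ‖u x y‖ ≤ B) ∧
  (∀ x y i, u (x + (2*n) • Pi.single i 1) y = u x y) ∧
  (∀ x y, (∑ i, (u (x + Pi.single i 1) (y+1) + u (x - Pi.single i 1) (y+1)))
      + u x (y+2) + u x y = 2 * d * u x (y+1))


/-!
Expand each layer `u(·, y)` in the characters `x ↦ e^{i h k·x}`, `k ∈ I^{d-1}`, of the discrete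
torus. The discrete Laplace equation decouples into the scalar recurrences
`A_k(y+2) = 2λ(kh) A_k(y+1) - A_k(y)`, whose only bounded solutions are `A_k(0) Q(λ(kh))^{-y}`
when `λ(kh) > 1`, and the constants when `k = 0`; the mean-zero condition kills the latter.
For `k ≠ 0` some `|k_i h|` lies in `[h, π]`, so `1 - cos s ≥ c s²` gives `λ(kh) ≥ 1 + c h²`,
hence `Q(λ(kh)) ≥ 1 + √c h`, and Bernoulli's inequality gives
`Q(λ(kh))^N ≥ 1 + N √c h ≥ 1 + √c r`. Parseval turns this decay of every mode into the
`L²_h` estimate.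
-/

open Finset

section periodic

variable {M : Type*} {m n : ℕ}

/-- `2π`-periodicity in every variable, in the integer coordinates `x / h` of the mesh. -/
def MeshPeriodic (n : ℕ) (f : (Fin m → ℤ) → M) : Prop :=
  ∀ x v, f (x + (2 * n) • v) = f x

lemma MeshPeriodic.of_single {f : (Fin m → ℤ) → M}
    (hf : ∀ x i, f (x + (2 * n) • Pi.single i 1) = f x) : MeshPeriodic n f := by
  let periods : AddSubgroup (Fin m → ℤ) :=
    { carrier := {v | ∀ x, f (x + v) = f x}
      zero_mem' := fun x => by rw [add_zero]
      add_mem' := fun ha hb x => by rw [← add_assoc, hb, ha]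
      neg_mem' := fun {v} hv x => by rw [← hv (x + -v), neg_add_cancel_right] }
  intro x v
  have hv : (2 * n) • v = ∑ i, v i • ((2 * n) • Pi.single i (1 : ℤ)) := by
    ext j
    simp [Finset.sum_apply, Pi.single_apply, mul_comm]
  have hmem : (2 * n) • v ∈ periods := hv ▸
    AddSubgroup.sum_mem _ fun i _ => AddSubgroup.zsmul_mem _ (show _ ∈ periods from (hf · i)) _
  exact hmem x

lemma mem_ILpi_iff {x : Fin m → ℤ} : x ∈ ILpi m n ↔ ∀ i, -(n : ℤ) < x i ∧ x i ≤ n := by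
  simp only [ILpi, Finset.mem_Icc, Pi.le_def]
  exact ⟨fun h i => ⟨by linarith [h.1 i], h.2 i⟩,
    fun h => ⟨fun i => by linarith [h i], fun i => (h i).2⟩⟩

lemma card_ILpi : #(ILpi m n) = (2 * n) ^ m := by
  rw [ILpi, Pi.card_Icc, Finset.prod_const, Int.card_Icc, Finset.card_univ, Fintype.card_fin]
  congr 1
  omega

lemma MeshPeriodic.sum_ILpi_add [AddCommMonoid M] (hn : n ≠ 0) {f : (Fin m → ℤ) → M}
    (hf : MeshPeriodic n f) (a : Fin m → ℤ) :
    ∑ x ∈ ILpi m n, f (x + a) = ∑ x ∈ ILpi m n, f x := by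
  have hp : (0 : ℤ) < 2 * n := by omega
  -- `red` reduces every coordinate modulo `2n` into `(-n, n]`; `x ↦ red (x + a)` permutes `ILpi`
  let red : (Fin m → ℤ) → Fin m → ℤ := fun x i => toIocMod hp (-n) (x i)
  have red_mem x : red x ∈ ILpi m n := mem_ILpi_iff.2 fun i => by
    have := toIocMod_mem_Ioc hp (-n) (x i)
    exact ⟨this.1, by linarith [this.2]⟩
  have red_eq x : red x = x + (2 * n) • fun i => -toIocDiv hp (-n) (x i) := by
    ext i
    simp [red, toIocMod, sub_eq_add_neg, mul_comm]
  have red_add x v (hx : x ∈ ILpi m n) : red (x + (2 * n) • v) = x := by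
    ext i
    have hxi := mem_ILpi_iff.1 hx i
    have : x i + (2 * n) • v i = x i + v i • (2 * n : ℤ) := by simp [mul_comm]
    simp only [red, Pi.add_apply, Pi.smul_apply, this, toIocMod_add_zsmul, toIocMod_eq_self]
    constructor <;> linarith
  refine Finset.sum_nbij' (fun x => red (x + a)) (fun x => red (x - a)) (fun x _ => red_mem _)
    (fun x _ => red_mem _) (fun x hx => ?_) (fun x hx => ?_) (fun x _ => ?_)
  · rw [red_eq (x + a), add_sub_right_comm, add_sub_cancel_right, red_add _ _ hx]
  · rw [red_eq (x - a), add_right_comm, sub_add_cancel, red_add _ _ hx]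
  · rw [red_eq, hf]

end periodic

section meshChar

open Complex ComplexConjugate

variable {m n : ℕ}

variable (n) in
noncomputable def meshChar (k x : Fin m → ℤ) : ℂ :=
  exp (↑(π / n * (dotProduct k x : ℤ)) * I)

lemma meshChar_add_right (k x y : Fin m → ℤ) :
    meshChar n k (x + y) = meshChar n k x * meshChar n k y := by
  simp only [meshChar, dotProduct_add, ← exp_add]
  push_cast
  ring_nf

lemma meshChar_comm (k x : Fin m → ℤ) : meshChar n k x = meshChar n x k := by
  rw [meshChar, meshChar, dotProduct_comm]

lemma meshChar_zero_left (x : Fin m → ℤ) : meshChar n 0 x = 1 := by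
  simp [meshChar]

lemma meshChar_zero_right (k : Fin m → ℤ) : meshChar n k 0 = 1 := by
  simp [meshChar]

lemma norm_meshChar (k x : Fin m → ℤ) : ‖meshChar n k x‖ = 1 :=
  norm_exp_ofReal_mul_I _

lemma conj_meshChar (k x : Fin m → ℤ) : conj (meshChar n k x) = meshChar n k (-x) := by
  rw [meshChar, ← exp_conj, map_mul, conj_ofReal, conj_I, meshChar, dotProduct_neg]
  push_cast
  ring_nf

lemma meshPeriodic_meshChar (hn : n ≠ 0) (k : Fin m → ℤ) : MeshPeriodic n (meshChar n k) := by
  intro x v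
  suffices meshChar n k ((2 * n) • v) = 1 by rw [meshChar_add_right, this, mul_one]
  refine exp_eq_one_iff.2 ⟨dotProduct k v, ?_⟩
  rw [dotProduct_smul, nsmul_eq_mul]
  push_cast
  field_simp

lemma meshChar_single (k : Fin m → ℤ) (i : Fin m) :
    meshChar n k (Pi.single i 1) = exp (↑(π / n * k i) * I) := by
  simp [meshChar]

lemma meshChar_single_add_neg (k : Fin m → ℤ) (i : Fin m) :
    meshChar n k (Pi.single i 1) + meshChar n k (-Pi.single i 1) =
      2 * Real.cos (π / n * k i) := by
  simp only [meshChar, dotProduct_neg, dotProduct_single, mul_one, ofReal_cos, Complex.cos]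
  push_cast
  ring_nf

lemma meshChar_single_ne_one (hn : n ≠ 0) {k : Fin m → ℤ} {i : Fin m} (hk : k i ≠ 0)
    (hk' : |k i| < 2 * n) : meshChar n k (Pi.single i 1) ≠ 1 := by
  intro h
  have hcos := congrArg re h
  rw [meshChar_single, exp_ofReal_mul_I_re, one_re] at hcos
  have hn' : (0 : ℝ) < n := Nat.cast_pos.2 (Nat.pos_of_ne_zero hn)
  have hki : |(k i : ℝ)| < 2 * n := by exact_mod_cast hk'
  have hlt : |π / n * k i| < 2 * π := by
    rw [abs_mul, abs_of_pos (div_pos Real.pi_pos hn'), div_mul_eq_mul_div, div_lt_iff₀ hn']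
    nlinarith [Real.pi_pos]
  obtain ⟨h1, h2⟩ := abs_lt.1 hlt
  rw [Real.cos_eq_one_iff_of_lt_of_lt h1 h2] at hcos
  exact hk (by exact_mod_cast (mul_eq_zero.1 hcos).resolve_left (div_pos Real.pi_pos hn').ne')

lemma sum_ILpi_meshChar (hn : n ≠ 0) {j : Fin m → ℤ} (hj : ∀ i, |j i| < 2 * n) :
    ∑ k ∈ ILpi m n, meshChar n j k = if j = 0 then ((2 * n : ℕ) : ℂ) ^ m else 0 := by
  split_ifs with h
  · simp [h, meshChar_zero_left, card_ILpi]
  obtain ⟨i, hi⟩ : ∃ i, j i ≠ 0 := by simpa [funext_iff] using h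
  -- translating the summation variable by `eᵢ` multiplies the sum by `meshChar n j eᵢ ≠ 1`
  have hshift := (meshPeriodic_meshChar hn j).sum_ILpi_add hn (Pi.single i 1)
  simp only [meshChar_add_right, ← Finset.sum_mul] at hshift
  by_contra hS
  exact meshChar_single_ne_one hn hi (hj i) ((mul_eq_left₀ hS).1 hshift)

end meshChar

section meshFourier

open ComplexConjugate

variable {m n : ℕ}

variable (n) in
noncomputable def meshFourier (k : Fin m → ℤ) : ((Fin m → ℤ) → ℂ) →ₗ[ℂ] ℂ where
  toFun v := ∑ x ∈ ILpi m n, v x * meshChar n k (-x)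
  map_add' v w := by simp only [Pi.add_apply, add_mul, Finset.sum_add_distrib]
  map_smul' c v := by
    simp only [Pi.smul_apply, smul_eq_mul, mul_assoc, Finset.mul_sum, RingHom.id_apply]

lemma meshFourier_apply (k : Fin m → ℤ) (v : (Fin m → ℤ) → ℂ) :
    meshFourier n k v = ∑ x ∈ ILpi m n, v x * meshChar n k (-x) := rfl

lemma meshFourier_zero_left (v : (Fin m → ℤ) → ℂ) :
    meshFourier n 0 v = ∑ x ∈ ILpi m n, v x := by
  simp [meshFourier_apply, meshChar_zero_left]

lemma meshFourier_comp_add_right (hn : n ≠ 0) {v : (Fin m → ℤ) → ℂ} (hv : MeshPeriodic n v)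
    (k a : Fin m → ℤ) :
    meshFourier n k (fun x => v (x + a)) = meshChar n k a * meshFourier n k v := by
  have hper : MeshPeriodic n fun x => v x * meshChar n k (-x) := fun x w => by
    simp only [hv x w, neg_add, ← smul_neg]
    rw [meshPeriodic_meshChar hn k]
  have hinv : meshChar n k a * meshChar n k (-a) = 1 := by
    rw [← meshChar_add_right, add_neg_cancel, meshChar_zero_right]
  calc meshFourier n k (fun x => v (x + a))
      = meshChar n k a * ∑ x ∈ ILpi m n, v (x + a) * meshChar n k (-(x + a)) := by
        simp only [meshFourier_apply, Finset.mul_sum, neg_add, meshChar_add_right]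
        exact Finset.sum_congr rfl fun x _ => by
          linear_combination -(v (x + a) * meshChar n k (-x)) * hinv
    _ = meshChar n k a * meshFourier n k v := by rw [hper.sum_ILpi_add hn, meshFourier_apply]

lemma norm_meshFourier_le {B : ℝ} {v : (Fin m → ℤ) → ℂ} (hv : ∀ x, ‖v x‖ ≤ B)
    (k : Fin m → ℤ) : ‖meshFourier n k v‖ ≤ #(ILpi m n) * B :=
  (norm_sum_le _ _).trans <| by
    simpa [norm_meshChar] using Finset.sum_le_sum fun x (_ : x ∈ ILpi m n) => hv x

lemma sum_norm_sq_meshFourier (hn : n ≠ 0) (v : (Fin m → ℤ) → ℂ) :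
    ∑ k ∈ ILpi m n, ‖meshFourier n k v‖ ^ 2 =
      (2 * n) ^ m * ∑ x ∈ ILpi m n, ‖v x‖ ^ 2 := by
  apply Complex.ofReal_injective
  push_cast
  simp only [← Complex.mul_conj']
  have hchar (k x x' : Fin m → ℤ) :
      meshChar n k (-x) * conj (meshChar n k (-x')) = meshChar n (x' - x) k := by
    rw [conj_meshChar, neg_neg, ← meshChar_add_right, neg_add_eq_sub, meshChar_comm]
  calc ∑ k ∈ ILpi m n, meshFourier n k v * conj (meshFourier n k v)
      = ∑ k ∈ ILpi m n, ∑ x ∈ ILpi m n, ∑ x' ∈ ILpi m n,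
          v x * conj (v x') * meshChar n (x' - x) k := by
        refine Finset.sum_congr rfl fun k _ => ?_
        rw [meshFourier_apply, map_sum, Finset.sum_mul_sum]
        refine Finset.sum_congr rfl fun x _ => Finset.sum_congr rfl fun x' _ => ?_
        rw [map_mul, ← hchar]
        ring
    _ = ∑ x ∈ ILpi m n, ∑ x' ∈ ILpi m n,
          v x * conj (v x') * ∑ k ∈ ILpi m n, meshChar n (x' - x) k := by
        simp only [Finset.mul_sum]
        rw [Finset.sum_comm]
        exact Finset.sum_congr rfl fun x _ => Finset.sum_comm
    _ = ∑ x ∈ ILpi m n, ∑ x' ∈ ILpi m n,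
          v x * conj (v x') * if x' = x then ((2 * n : ℕ) : ℂ) ^ m else 0 := by
        refine Finset.sum_congr rfl fun x hx => Finset.sum_congr rfl fun x' hx' => ?_
        rw [sum_ILpi_meshChar hn fun i => ?_]
        · simp only [sub_eq_zero]
        have := mem_ILpi_iff.1 hx i
        have := mem_ILpi_iff.1 hx' i
        rw [Pi.sub_apply, abs_lt]
        constructor <;> linarith
    _ = (2 * n) ^ m * ∑ x ∈ ILpi m n, v x * conj (v x) := by
        simp [Finset.mul_sum, mul_comm]

lemma sum_norm_sq_le_of_norm_meshFourier_le (hn : n ≠ 0) {θ : ℝ} {v w : (Fin m → ℤ) → ℂ}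
    (h : ∀ k ∈ ILpi m n, ‖meshFourier n k w‖ ≤ θ * ‖meshFourier n k v‖) :
    ∑ x ∈ ILpi m n, ‖w x‖ ^ 2 ≤ θ ^ 2 * ∑ x ∈ ILpi m n, ‖v x‖ ^ 2 := by
  have hpos : (0 : ℝ) < (2 * n) ^ m := by positivity
  refine le_of_mul_le_mul_left ?_ hpos
  rw [mul_left_comm, ← sum_norm_sq_meshFourier hn, ← sum_norm_sq_meshFourier hn, Finset.mul_sum]
  exact Finset.sum_le_sum fun k hk => by
    rw [← mul_pow]
    exact pow_le_pow_left₀ (norm_nonneg _) (h k hk) 2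

end meshFourier

lemma eq_inv_pow_mul_of_bounded_of_rec {𝕜 : Type*} [NormedField 𝕜] {q : 𝕜} (hq : 1 < ‖q‖)
    {a : ℕ → 𝕜} (hbd : ∃ C, ∀ y, ‖a y‖ ≤ C)
    (hrec : ∀ y, a (y + 2) = (q + q⁻¹) * a (y + 1) - a y) (y : ℕ) :
    a y = q⁻¹ ^ y * a 0 := by
  have hq0 : q ≠ 0 := norm_pos_iff.1 (one_pos.trans hq)
  -- `b y = a (y + 1) - q⁻¹ a y` grows geometrically with ratio `q`, so boundedness kills it
  set b : ℕ → 𝕜 := fun y => a (y + 1) - q⁻¹ * a y with hb_def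
  have hb y : b y = q ^ y * b 0 := by
    induction y with
    | zero => simp
    | succ y ih =>
      have hstep : b (y + 1) = q * b y := by
        simp only [hb_def, hrec]
        field_simp
        ring
      rw [hstep, ih, pow_succ]
      ring
  have hb0 : b 0 = 0 := by
    obtain ⟨C, hC⟩ := hbd
    by_contra h
    obtain ⟨y, hy⟩ := pow_unbounded_of_one_lt ((C + ‖q⁻¹‖ * C) / ‖b 0‖) hq
    have hbC : ‖b y‖ ≤ C + ‖q⁻¹‖ * C :=
      (norm_sub_le _ _).trans (by rw [norm_mul]; gcongr <;> exact hC _)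
    rw [hb, norm_mul, norm_pow, ← le_div_iff₀ (norm_pos_iff.2 h)] at hbC
    exact hbC.not_gt hy
  induction y with
  | zero => simp
  | succ y ih =>
    have : a (y + 1) = q⁻¹ * a y := by
      linear_combination (hb y).trans (by rw [hb0, mul_zero])
    rw [this, ih, pow_succ]
    ring

lemma eq_apply_zero_of_bounded_of_rec {E : Type*} [NormedAddCommGroup E] [NormedSpace ℝ E]
    {a : ℕ → E} (hbd : ∃ C, ∀ y, ‖a y‖ ≤ C)
    (hrec : ∀ y, a (y + 2) - a (y + 1) = a (y + 1) - a y) (y : ℕ) : a y = a 0 := by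
  have hdiff y : a (y + 1) - a y = a 1 - a 0 := by
    induction y with
    | zero => rfl
    | succ y ih => rw [hrec, ih]
  have hlin y : a y = a 0 + y • (a 1 - a 0) := by
    induction y with
    | zero => simp
    | succ y ih => rw [succ_nsmul, ← add_assoc, ← ih, ← hdiff y, add_sub_cancel]
  suffices a 1 - a 0 = 0 by rw [hlin, this, smul_zero, add_zero]
  obtain ⟨C, hC⟩ := hbd
  by_contra h
  obtain ⟨y, hy⟩ := exists_nat_gt ((C + C) / ‖a 1 - a 0‖)
  have hyC : y * ‖a 1 - a 0‖ ≤ C + C := by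
    calc y * ‖a 1 - a 0‖ = ‖a y - a 0‖ := by
          rw [hlin y, add_sub_cancel_left, RCLike.norm_nsmul ℝ, nsmul_eq_mul]
      _ ≤ C + C := (norm_sub_le _ _).trans (add_le_add (hC y) (hC 0))
  rw [← le_div_iff₀ (norm_pos_iff.2 h)] at hyC
  exact hyC.not_gt hy

section multiplier

open Real

variable {d n : ℕ}

lemma two_div_pi_sq_le_cLow : 2 / π ^ 2 ≤ cLow := by
  refine le_csInf ⟨_, π, ⟨⟨by linarith [pi_pos], le_rfl⟩, pi_ne_zero⟩, rfl⟩ ?_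
  rintro _ ⟨s, ⟨hs, hs0⟩, rfl⟩
  rw [le_div_iff₀ (sq_pos_of_ne_zero hs0)]
  linarith [cos_le_one_sub_mul_cos_sq (abs_le.2 hs)]

lemma cLow_pos : 0 < cLow := lt_of_lt_of_le (by positivity) two_div_pi_sq_le_cLow

lemma cLow_mul_sq_le_one_sub_cos {s : ℝ} (hs : |s| ≤ π) : cLow * s ^ 2 ≤ 1 - cos s := by
  rcases eq_or_ne s 0 with rfl | hs0
  · simp
  have hbdd : BddBelow ((fun s => (1 - cos s) / s ^ 2) '' (Set.Icc (-π) π \ {0})) :=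
    ⟨0, by rintro _ ⟨s, -, rfl⟩; exact div_nonneg (by linarith [cos_le_one s]) (sq_nonneg s)⟩
  have := csInf_le hbdd ⟨s, ⟨abs_le.1 hs, hs0⟩, rfl⟩
  rwa [le_div_iff₀ (by positivity)] at this

lemma lam_eq_one_add_sum (hd : 1 ≤ d) (t : Fin (d - 1) → ℝ) :
    lam d t = 1 + ∑ i, (1 - cos (t i)) := by
  rw [lam, Finset.sum_sub_distrib, Finset.sum_const, Finset.card_univ, Fintype.card_fin,
    nsmul_eq_mul, Nat.cast_sub hd]
  push_cast
  ring

lemma lam_zero (hd : 1 ≤ d) : lam d (fun _ => 0) = 1 := by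
  simp [lam_eq_one_add_sum hd]

lemma one_add_cLow_mul_sq_le_lam (hd : 1 ≤ d) (hn : n ≠ 0) {k : Fin (d - 1) → ℤ}
    (hk : k ∈ ILpi (d - 1) n) (hk0 : k ≠ 0) :
    1 + cLow * (π / n) ^ 2 ≤ lam d fun i => π / n * k i := by
  obtain ⟨i, hi⟩ : ∃ i, k i ≠ 0 := by simpa [funext_iff] using hk0
  have hh : 0 < π / n := div_pos pi_pos (Nat.cast_pos.2 (Nat.pos_of_ne_zero hn))
  have hki : (1 : ℝ) ≤ |(k i : ℝ)| ∧ |(k i : ℝ)| ≤ n := by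
    have := mem_ILpi_iff.1 hk i
    constructor
    · exact_mod_cast Int.one_le_abs hi
    · exact_mod_cast abs_le.2 ⟨by omega, this.2⟩
  have habs : |π / n * k i| = π / n * |(k i : ℝ)| := by rw [abs_mul, abs_of_pos hh]
  have hle : |π / n * k i| ≤ π := by
    rw [habs]
    calc π / n * |(k i : ℝ)| ≤ π / n * n := by gcongr; exact hki.2
      _ = π := by field_simp
  calc 1 + cLow * (π / n) ^ 2 ≤ 1 + cLow * (π / n * k i) ^ 2 := by
        rw [← sq_abs (π / n * k i), habs]
        gcongr
        · exact cLow_pos.le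
        · nlinarith [hki.1]
    _ ≤ 1 + (1 - cos (π / n * k i)) := by gcongr; exact cLow_mul_sq_le_one_sub_cos hle
    _ ≤ lam d fun i => π / n * k i := by
        rw [lam_eq_one_add_sum hd]
        gcongr
        exact Finset.single_le_sum (f := fun i => 1 - cos (π / n * k i))
          (fun j _ => by linarith [cos_le_one (π / n * k j)]) (Finset.mem_univ i)

lemma Qr_add_inv {z : ℝ} (hz : 1 ≤ z) : Qr z + (Qr z)⁻¹ = 2 * z := by
  have hQ : 1 ≤ Qr z := by unfold Qr; nlinarith [sqrt_nonneg (z + 1), sqrt_nonneg (z - 1)]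
  have h1 := mul_self_sqrt (show 0 ≤ z + 1 by linarith)
  have h2 := mul_self_sqrt (show 0 ≤ z - 1 by linarith)
  field_simp
  unfold Qr
  nlinarith

lemma one_add_le_Qr {a z : ℝ} (ha : 0 ≤ a) (hz : 1 + a ^ 2 ≤ z) : 1 + a ≤ Qr z := by
  have h1 : 1 ≤ √(z + 1) := one_le_sqrt.2 (by nlinarith)
  have h2 : a ≤ √(z - 1) := le_sqrt_of_sq_le (by linarith)
  unfold Qr
  nlinarith

lemma one_add_sqrt_cLow_mul_le_Qr_lam (hd : 1 ≤ d) (hn : n ≠ 0) {k : Fin (d - 1) → ℤ}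
    (hk : k ∈ ILpi (d - 1) n) (hk0 : k ≠ 0) :
    1 + √cLow * (π / n) ≤ Qr (lam d fun i => π / n * k i) :=
  one_add_le_Qr (by positivity) (by
    rw [mul_pow, sq_sqrt cLow_pos.le]
    exact one_add_cLow_mul_sq_le_lam hd hn hk hk0)

lemma Qr_lam_zpow_neg_le (hd : 1 ≤ d) (hn : n ≠ 0) {k : Fin (d - 1) → ℤ}
    (hk : k ∈ ILpi (d - 1) n) (hk0 : k ≠ 0) {r : ℝ} (hr : 0 ≤ r) {N : ℕ}
    (hNh : r ≤ N * (π / n)) :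
    Qr (lam d fun i => π / n * k i) ^ (-(N : ℤ)) ≤ (1 + √cLow * r)⁻¹ := by
  have ha : 0 ≤ √cLow * (π / n) := by positivity
  rw [zpow_neg, zpow_natCast]
  refine inv_anti₀ (by positivity) ?_
  calc 1 + √cLow * r ≤ 1 + N * (√cLow * (π / n)) := by rw [mul_left_comm]; gcongr
    _ ≤ (1 + √cLow * (π / n)) ^ N := one_add_mul_le_pow (by linarith) N
    _ ≤ _ := pow_le_pow_left₀ (by linarith) (one_add_sqrt_cLow_mul_le_Qr_lam hd hn hk hk0) N

end multiplier

namespace HalfHarmMesh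

variable {d n : ℕ} {u : (Fin (d - 1) → ℤ) → ℕ → ℂ}

lemma meshPeriodic (hu : HalfHarmMesh d n u) (y : ℕ) : MeshPeriodic n (u · y) :=
  MeshPeriodic.of_single fun x i => hu.2.1 x y i

lemma bounded_meshFourier (hu : HalfHarmMesh d n u) (k : Fin (d - 1) → ℤ) :
    ∃ C, ∀ y, ‖meshFourier n k (u · y)‖ ≤ C := by
  obtain ⟨B, hB⟩ := hu.1
  exact ⟨_, fun y => norm_meshFourier_le (hB · y) k⟩

lemma meshFourier_rec (hn : n ≠ 0) (hu : HalfHarmMesh d n u) (k : Fin (d - 1) → ℤ) (y : ℕ) :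
    meshFourier n k (u · (y + 2)) =
      2 * (lam d fun i => π / n * k i : ℝ) * meshFourier n k (u · (y + 1)) -
        meshFourier n k (u · y) := by
  have key : meshFourier n k (∑ i, ((fun x => u (x + Pi.single i 1) (y + 1)) +
      fun x => u (x + -Pi.single i 1) (y + 1)) + (u · (y + 2)) + (u · y)) =
      meshFourier n k ((2 * d : ℂ) • (u · (y + 1))) :=
    congrArg _ (funext fun x => by simpa [Finset.sum_apply, sub_eq_add_neg] using hu.2.2 x y)
  simp only [map_add, map_sum, map_smul, meshFourier_comp_add_right hn (hu.meshPeriodic _),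
    ← add_mul, ← Finset.sum_mul, meshChar_single_add_neg, ← Finset.mul_sum, smul_eq_mul] at key
  rw [lam]
  push_cast at key ⊢
  linear_combination key

lemma meshFourier_zero_left_eq_sum (hd : 1 ≤ d) (hn : n ≠ 0) (hu : HalfHarmMesh d n u)
    (y : ℕ) : meshFourier n 0 (u · y) = ∑ x ∈ ILpi (d - 1) n, u x 0 := by
  rw [← meshFourier_zero_left]
  refine eq_apply_zero_of_bounded_of_rec (hu.bounded_meshFourier 0) (fun y => ?_) y
  rw [hu.meshFourier_rec hn 0 y]
  simp only [Pi.zero_apply, Int.cast_zero, mul_zero, lam_zero hd]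
  push_cast
  ring

lemma norm_meshFourier_eq (hd : 1 ≤ d) (hn : n ≠ 0) (hu : HalfHarmMesh d n u)
    {k : Fin (d - 1) → ℤ} (hk : k ∈ ILpi (d - 1) n) (hk0 : k ≠ 0) (y : ℕ) :
    ‖meshFourier n k (u · y)‖ =
      Qr (lam d fun i => π / n * k i) ^ (-(y : ℤ)) * ‖meshFourier n k (u · 0)‖ := by
  have hh : 0 < π / n := div_pos Real.pi_pos (Nat.cast_pos.2 (Nat.pos_of_ne_zero hn))
  have hq := (lt_add_of_pos_right 1 (mul_pos (Real.sqrt_pos.2 cLow_pos) hh)).trans_le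
    (one_add_sqrt_cLow_mul_le_Qr_lam hd hn hk hk0)
  have hl := (le_add_of_nonneg_right (mul_nonneg cLow_pos.le (sq_nonneg _))).trans
    (one_add_cLow_mul_sq_le_lam hd hn hk hk0)
  set l := lam d fun i => π / n * k i
  have hnorm : ‖(Qr l : ℂ)‖ = Qr l := by rw [Complex.norm_real, Real.norm_of_nonneg (by linarith)]
  have hsum : (Qr l : ℂ) + (Qr l : ℂ)⁻¹ = 2 * l := by exact_mod_cast Qr_add_inv hl
  rw [eq_inv_pow_mul_of_bounded_of_rec (hnorm ▸ hq) (hu.bounded_meshFourier k)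
    (fun y => by rw [hu.meshFourier_rec hn k y, hsum]) y]
  rw [norm_mul, norm_pow, norm_inv, hnorm, zpow_neg, zpow_natCast, inv_pow]

end HalfHarmMesh

theorem halfspace_mesh_L2_decay_general
    (d n : ℕ) (hd : 2 ≤ d) (hn : 1 ≤ n)
    (u : (Fin (d-1) → ℤ) → ℕ → ℂ) (hu : HalfHarmMesh d n u)
    (r : ℝ) (hr : 0 ≤ r) (N : ℕ)
    (hNh : r ≤ (N:ℝ) * (π / (n:ℝ)))
    (hmean : (∑ x ∈ ILpi (d-1) n, u x 0) = 0) :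
    (∀ k ∈ ILpi (d-1) n, k ≠ 0 →
        (Qr (lam d (fun i => π / (n:ℝ) * (k i : ℝ)))) ^ (-(N:ℤ))
          ≤ (1 + Real.sqrt cLow * r)⁻¹) ∧
    ((π / (n:ℝ)) ^ (d-1) * ∑ x ∈ ILpi (d-1) n, ‖u x N‖ ^ 2)
        ^ ((1:ℝ)/2)
      ≤ (1 + Real.sqrt cLow * r)⁻¹ *
        ((π / (n:ℝ)) ^ (d-1) * ∑ x ∈ ILpi (d-1) n, ‖u x 0‖ ^ 2)
          ^ ((1:ℝ)/2) := by
  have hd1 : 1 ≤ d := by omega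
  have hn0 : n ≠ 0 := by omega
  set θ := (1 + √cLow * r)⁻¹
  have hdecay k (hk : k ∈ ILpi (d - 1) n) (hk0 : k ≠ 0) :=
    Qr_lam_zpow_neg_le hd1 hn0 hk hk0 hr hNh
  refine ⟨hdecay, ?_⟩
  have hmode : ∀ k ∈ ILpi (d - 1) n,
      ‖meshFourier n k (u · N)‖ ≤ θ * ‖meshFourier n k (u · 0)‖ := by
    intro k hk
    rcases eq_or_ne k 0 with rfl | hk0
    · simp [hu.meshFourier_zero_left_eq_sum hd1 hn0, hmean]
    · rw [hu.norm_meshFourier_eq hd1 hn0 hk hk0]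
      exact mul_le_mul_of_nonneg_right (hdecay k hk hk0) (norm_nonneg _)
  have hsum := sum_norm_sq_le_of_norm_meshFourier_le hn0 hmode
  rw [← Real.sqrt_eq_rpow, ← Real.sqrt_eq_rpow]
  calc √((π / n) ^ (d - 1) * ∑ x ∈ ILpi (d - 1) n, ‖u x N‖ ^ 2)
      ≤ √(θ ^ 2 * ((π / n) ^ (d - 1) * ∑ x ∈ ILpi (d - 1) n, ‖u x 0‖ ^ 2)) := by
        rw [mul_left_comm]
        exact Real.sqrt_le_sqrt (mul_le_mul_of_nonneg_left hsum (by positivity))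
    _ = θ * √((π / n) ^ (d - 1) * ∑ x ∈ ILpi (d - 1) n, ‖u x 0‖ ^ 2) := by
        rw [Real.sqrt_mul (sq_nonneg θ), Real.sqrt_sq (by positivity)]

/-- Decay of the multiplier and `L²_h` contraction: if `N·h ≥ r` and `u` has
mean zero on the bottom layer, then (i) `Q(λ(kh))^{-N} ≤ (1+√c·r)⁻¹` for every
`k ∈ I_{π/h}^{d-1} \ {0}`, and (ii)
`‖u(·,Nh)‖_{L²_h} ≤ (1+√c·r)⁻¹ ‖u(·,0)‖_{L²_h}`. -/
theorem halfspace_mesh_L2_decay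
    (d n : ℕ) (hd : 2 ≤ d) (hn : 1 ≤ n)
    (u : (Fin (d-1) → ℤ) → ℕ → ℂ) (hu : HalfHarmMesh d n u)
    (r : ℝ) (hr : 0 ≤ r) (N : ℕ) (hN : 1 ≤ N)
    (hNh : r ≤ (N:ℝ) * (π / (n:ℝ)))
    (hmean : (∑ x ∈ ILpi (d-1) n, u x 0) = 0) :
    (∀ k ∈ ILpi (d-1) n, k ≠ 0 →
        (Qr (lam d (fun i => π / (n:ℝ) * (k i : ℝ)))) ^ (-(N:ℤ))
          ≤ (1 + Real.sqrt cLow * r)⁻¹) ∧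
    ((π / (n:ℝ)) ^ (d-1) * ∑ x ∈ ILpi (d-1) n, ‖u x N‖ ^ 2)
        ^ ((1:ℝ)/2)
      ≤ (1 + Real.sqrt cLow * r)⁻¹ *
        ((π / (n:ℝ)) ^ (d-1) * ∑ x ∈ ILpi (d-1) n, ‖u x 0‖ ^ 2)
          ^ ((1:ℝ)/2) :=
  halfspace_mesh_L2_decay_general d n hd hn u hu r hr N hNh hmean
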